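/- arXiv:1709.03846 — 4 statements merged into one kernel-verified Lean document; each statement's English description precedes it below -/
import Mathlib

section
/- If M is a matching in a finite graph G and P is an M-augmenting path, then the symmetric difference M Δ E(P) is a matching of G with cardinality |M| + 1. -/
/-- `M` is a matching of the simple graph `G`: a set of edges of `G`,
no two of which share a vertex. -/
def IsMatching {V : Type*} (G : SimpleGraph V) [Fintype V] [DecidableEq V]
    [DecidableRel G.Adj] (M : Finset (Sym2 V)) : Prop :=
  M ⊆ G.edgeFinset ∧ ∀ e ∈ M, ∀ f ∈ M, e ≠ f → ∀ v : V, v ∈ e → v ∉ f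

/-- A vertex is unmatched by `M` if it is an endpoint of no edge of `M`. -/
def Unmatched {V : Type*} (M : Finset (Sym2 V)) (v : V) : Prop :=
  ∀ e ∈ M, v ∉ e

/-- The list of edges traversed by a list of vertices. -/
def pathEdges {V : Type*} (p : List V) : List (Sym2 V) :=
  List.zipWith (fun a b => s(a, b)) p p.tail

/-- `p` is a (vertex list of a) path in `G`: distinct vertices, consecutive ones adjacent. -/
def IsPathList {V : Type*} (G : SimpleGraph V) (p : List V) : Prop :=
  p.Nodup ∧ p.Chain' G.Adj

/-- The edges along `p` alternate between membership and non-membership in `M`. -/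
def AlternatingList {V : Type*} [DecidableEq V] (M : Finset (Sym2 V)) (p : List V) : Prop :=
  ∀ i : ℕ, (h : i + 1 < (pathEdges p).length) →
    ((pathEdges p)[i]'(Nat.lt_of_succ_lt h) ∈ M ↔ (pathEdges p)[i + 1]'h ∉ M)

/-- An `M`-augmenting path in `G`: a path whose edges alternate between `E \ M` and `M`
and whose two endpoint vertices are unmatched by `M`. -/
def IsAugmentingPath {V : Type*} (G : SimpleGraph V) [Fintype V] [DecidableEq V]
    (M : Finset (Sym2 V)) (p : List V) : Prop :=
  IsPathList G p ∧ 2 ≤ p.length ∧ AlternatingList M p ∧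
    (∃ u, p.head? = some u ∧ Unmatched M u) ∧
    (∃ w, p.getLast? = some w ∧ Unmatched M w)

/-!
Along an augmenting path the edges alternate, starting and ending outside `M`, so the path has
one more edge outside `M` than inside it, and swapping them raises the size by one. The result is
still a matching because an edge of `M` meeting the path at all is one of the path's own
`M`-edges: interior path vertices are covered by those, and the two ends are unmatched.
-/

section

variable {α : Type*}

lemma List.getElem_iff_odd_of_alternating {P : α → Prop} {l : List α}
    (h0 : ∀ h : 0 < l.length, ¬ P l[0])
    (halt : ∀ i (h : i + 1 < l.length), (P l[i] ↔ ¬ P l[i + 1])) :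
    ∀ i (h : i < l.length), P l[i] ↔ i % 2 = 1 := by
  intro i
  induction i with
  | zero => intro h; simpa using h0 h
  | succ i ih =>
    intro h
    rw [← not_iff_not, ← halt i h, ih (by omega)]
    omega

lemma List.countP_not_eq_countP_add_mod_two {P : α → Prop} [DecidablePred P] (l : List α)
    (hP : ∀ i (h : i < l.length), P l[i] ↔ i % 2 = 1) :
    l.countP (fun a => ¬ P a) = l.countP P + l.length % 2 := by
  induction l generalizing P with
  | nil => simp
  | cons a t ih =>
    have ha : ¬ P a := fun h => absurd ((hP 0 (by simp)).mp h) (by decide)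
    have ht := ih (P := fun a => ¬ P a) fun i hi => by
      have hi' : i + 1 < (a :: t).length := by simpa using hi
      rw [show t[i] = (a :: t)[i + 1] from rfl, hP (i + 1) hi']
      omega
    simp only [not_not, decide_not] at ht
    simp only [List.countP_cons, ha, decide_not, decide_false, Bool.not_false, Bool.false_eq_true,
      if_true, if_false, List.length_cons]
    omega

lemma Finset.card_symmDiff_eq_card_add [DecidableEq α] {s t : Finset α} {k : ℕ}
    (h : (t \ s).card = (s ∩ t).card + k) : (symmDiff s t).card = s.card + k := by
  rw [symmDiff_def, Finset.sup_eq_union, Finset.card_union_of_disjoint disjoint_sdiff_sdiff]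
  have := Finset.card_inter_add_card_sdiff s t
  omega

end

section PathEdges

variable {V : Type*}

lemma length_pathEdges (p : List V) : (pathEdges p).length = p.length - 1 := by
  simp [pathEdges]

lemma getElem_pathEdges (p : List V) (i : ℕ) (h : i < (pathEdges p).length) :
    (pathEdges p)[i] = s(p[i]'(by rw [length_pathEdges] at h; omega),
      p[i + 1]'(by rw [length_pathEdges] at h; omega)) := by
  simp [pathEdges, List.getElem_zipWith, List.getElem_tail]

lemma mem_of_mem_pathEdges {p : List V} {e : Sym2 V} {v : V} (he : e ∈ pathEdges p)
    (hv : v ∈ e) : v ∈ p := by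
  obtain ⟨i, hi, rfl⟩ := List.mem_iff_getElem.mp he
  rw [getElem_pathEdges, Sym2.mem_iff] at hv
  rcases hv with rfl | rfl <;> exact List.getElem_mem _

lemma eq_or_succ_eq_of_mem_getElem_pathEdges {p : List V} (hp : p.Nodup) {i j : ℕ}
    {hi : i < (pathEdges p).length} {hj : j < (pathEdges p).length} {v : V}
    (hvi : v ∈ (pathEdges p)[i]) (hvj : v ∈ (pathEdges p)[j]) :
    i = j ∨ i + 1 = j ∨ j + 1 = i := by
  rw [getElem_pathEdges, Sym2.mem_iff] at hvi hvj
  rcases hvi with rfl | rfl <;> rcases hvj with h | h <;>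
    have := (hp.getElem_inj_iff).mp h <;> omega

lemma nodup_pathEdges {p : List V} (hp : p.Nodup) : (pathEdges p).Nodup := by
  refine List.nodup_iff_injective_getElem.mpr ?_
  rintro ⟨i, hi⟩ ⟨j, hj⟩ hij
  rw [Fin.mk.injEq]
  simp only [getElem_pathEdges, Sym2.eq_iff, hp.getElem_inj_iff] at hij
  omega

lemma pathEdges_subset_edgeSet {G : SimpleGraph V} {p : List V} (hp : p.IsChain G.Adj) :
    ∀ e ∈ pathEdges p, e ∈ G.edgeSet := by
  intro e he
  obtain ⟨i, hi, rfl⟩ := List.mem_iff_getElem.mp he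
  rw [length_pathEdges] at hi
  rw [getElem_pathEdges, SimpleGraph.mem_edgeSet]
  exact List.isChain_iff_getElem.mp hp i (by omega)

end PathEdges

section Augmenting

variable {V : Type*} [Fintype V] [DecidableEq V] {G : SimpleGraph V} {M : Finset (Sym2 V)}
  {p : List V}

lemma IsMatching.eq_of_mem_of_mem [DecidableRel G.Adj] (hM : IsMatching G M) {e f : Sym2 V}
    {v : V} (he : e ∈ M) (hf : f ∈ M) (hve : v ∈ e) (hvf : v ∈ f) : e = f := by
  by_contra hne
  exact hM.2 e he f hf hne v hve hvf

lemma IsAugmentingPath.unmatched_getElem_zero (hp : IsAugmentingPath G M p) (h : 0 < p.length) :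
    Unmatched M p[0] := by
  obtain ⟨u, hu, hum⟩ := hp.2.2.2.1
  rw [List.head?_eq_getElem?, List.getElem?_eq_getElem h, Option.some_inj] at hu
  rwa [hu]

lemma IsAugmentingPath.unmatched_getElem_length_sub_one (hp : IsAugmentingPath G M p)
    (h : p.length - 1 < p.length) : Unmatched M p[p.length - 1] := by
  obtain ⟨w, hw, hwm⟩ := hp.2.2.2.2
  rw [List.getLast?_eq_getElem?, List.getElem?_eq_getElem h, Option.some_inj] at hw
  rwa [hw]

lemma IsAugmentingPath.getElem_pathEdges_mem_iff (hp : IsAugmentingPath G M p) (i : ℕ)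
    (h : i < (pathEdges p).length) : (pathEdges p)[i] ∈ M ↔ i % 2 = 1 :=
  List.getElem_iff_odd_of_alternating (P := (· ∈ M))
    (fun h0 he => hp.unmatched_getElem_zero (by rw [length_pathEdges] at h0; omega) _ he
      (by simp [getElem_pathEdges]))
    hp.2.2.1 i h

lemma IsAugmentingPath.length_pathEdges_mod_two (hp : IsAugmentingPath G M p) :
    (pathEdges p).length % 2 = 1 := by
  have hlen := length_pathEdges p
  have h2 := hp.2.1
  have hlast : (pathEdges p)[p.length - 2]'(by omega) ∉ M := fun he =>
    hp.unmatched_getElem_length_sub_one (by omega) _ he <| by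
      simp [getElem_pathEdges, show p.length - 2 + 1 = p.length - 1 by omega]
  rw [hp.getElem_pathEdges_mem_iff] at hlast
  omega

lemma IsAugmentingPath.mem_pathEdges_of_mem [DecidableRel G.Adj] (hp : IsAugmentingPath G M p)
    (hM : IsMatching G M) {e : Sym2 V} {v : V} (he : e ∈ M) (hve : v ∈ e) (hv : v ∈ p) :
    e ∈ pathEdges p := by
  obtain ⟨j, hj, rfl⟩ := List.mem_iff_getElem.mp hv
  have hlen := length_pathEdges p
  have hj0 : j ≠ 0 := by
    rintro rfl
    exact hp.unmatched_getElem_zero hj e he hve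
  have hjn : j ≠ p.length - 1 := by
    rintro rfl
    exact hp.unmatched_getElem_length_sub_one hj e he hve
  obtain ⟨i, hi, hiM, hji⟩ : ∃ i, ∃ hi : i < (pathEdges p).length,
      (pathEdges p)[i] ∈ M ∧ p[j] ∈ (pathEdges p)[i] := by
    rcases Nat.mod_two_eq_zero_or_one j with hpar | hpar
    · refine ⟨j - 1, by omega, (hp.getElem_pathEdges_mem_iff _ _).mpr (by omega), ?_⟩
      simp [getElem_pathEdges, show j - 1 + 1 = j by omega]
    · refine ⟨j, by omega, (hp.getElem_pathEdges_mem_iff _ _).mpr hpar, ?_⟩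
      simp [getElem_pathEdges]
  rw [hM.eq_of_mem_of_mem he hiM hve hji]
  exact List.getElem_mem _

theorem IsAugmentingPath.isMatching_symmDiff [DecidableRel G.Adj] (hp : IsAugmentingPath G M p)
    (hM : IsMatching G M) : IsMatching G (symmDiff M (pathEdges p).toFinset) := by
  refine ⟨fun e he => ?_, fun e he f hf hef v hve hvf => ?_⟩
  · rw [Finset.mem_symmDiff, List.mem_toFinset] at he
    rcases he with ⟨he, -⟩ | ⟨he, -⟩
    · exact hM.1 he
    · exact SimpleGraph.mem_edgeFinset.mpr (pathEdges_subset_edgeSet hp.1.2 e he)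
  · simp only [Finset.mem_symmDiff, List.mem_toFinset] at he hf
    rcases he with ⟨heM, heP⟩ | ⟨heP, heM⟩ <;>
      rcases hf with ⟨hfM, hfP⟩ | ⟨hfP, hfM⟩
    · exact hef (hM.eq_of_mem_of_mem heM hfM hve hvf)
    · exact heP (hp.mem_pathEdges_of_mem hM heM hve (mem_of_mem_pathEdges hfP hvf))
    · exact hfP (hp.mem_pathEdges_of_mem hM hfM hvf (mem_of_mem_pathEdges heP hve))
    · obtain ⟨i, hi, rfl⟩ := List.mem_iff_getElem.mp heP
      obtain ⟨j, hj, rfl⟩ := List.mem_iff_getElem.mp hfP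
      rw [hp.getElem_pathEdges_mem_iff] at heM hfM
      have hij : i ≠ j := by
        rintro rfl
        exact hef rfl
      have := eq_or_succ_eq_of_mem_getElem_pathEdges hp.1.1 hve hvf
      omega

theorem IsAugmentingPath.card_symmDiff (hp : IsAugmentingPath G M p) :
    (symmDiff M (pathEdges p).toFinset).card = M.card + 1 := by
  apply Finset.card_symmDiff_eq_card_add
  have hnd := nodup_pathEdges hp.1.1
  rw [Finset.sdiff_eq_filter, Finset.inter_comm, ← Finset.filter_mem_eq_inter,
    hnd.card_eq_countP, hnd.card_eq_countP,
    List.countP_not_eq_countP_add_mod_two _ hp.getElem_pathEdges_mem_iff,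
    hp.length_pathEdges_mod_two]

end Augmenting

/-- If `M` is a matching in a finite graph `G` and `P` is an `M`-augmenting path, then the
symmetric difference `M Δ E(P)` is a matching of `G` of cardinality `|M| + 1`. -/
theorem augment_symmDiff {V : Type*} [Fintype V] [DecidableEq V] (G : SimpleGraph V)
    [DecidableRel G.Adj] (M : Finset (Sym2 V)) (p : List V)
    (hM : IsMatching G M) (hp : IsAugmentingPath G M p) :
    IsMatching G (symmDiff M (pathEdges p).toFinset) ∧
      (symmDiff M (pathEdges p).toFinset).card = M.card + 1 :=
  ⟨hp.isMatching_symmDiff hM, hp.card_symmDiff⟩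
end

section
/- If M₁ and M₂ are two maximum matchings of a finite graph G and v is a vertex unmatched by M₁ but matched by M₂, then there exists a vertex w unmatched by M₂ and an M₁-alternating path in G from v to w. -/
/-!
Walk from `v` along an edge of `M₂`, then one of `M₁`, then `M₂`, and so on, always moving to the
partner of the current vertex. Since both are matchings and `v` is `M₁`-unmatched, the vertices
stay distinct until the walk reaches a vertex left unmatched by the matching whose turn it is.
If that matching is `M₂` we are done. If it is `M₁`, the walk is an `M₁`-augmenting path, which
contradicts the maximality of `M₁`.
-/

namespace IsMatching

variable {V : Type*} [Fintype V] [DecidableEq V] {G : SimpleGraph V} [DecidableRel G.Adj]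
  {M : Finset (Sym2 V)}

theorem eq_of_mem_of_mem_s4 (hM : IsMatching G M) {e f : Sym2 V} {x : V}
    (he : e ∈ M) (hf : f ∈ M) (hxe : x ∈ e) (hxf : x ∈ f) : e = f :=
  by_contra fun hne => hM.2 e he f hf hne x hxe hxf

theorem adj (hM : IsMatching G M) {x y : V} (h : s(x, y) ∈ M) : G.Adj x y := by
  simpa using hM.1 h

end IsMatching

section Partner

variable {V : Type*} {M : Finset (Sym2 V)} {x y : V}

open Classical in
/-- The vertex matched to `x` by `M`, or `x` itself when `x` is unmatched. -/
noncomputable def partner (M : Finset (Sym2 V)) (x : V) : V :=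
  if h : ∃ y, s(x, y) ∈ M then h.choose else x

theorem partner_eq_self_of_unmatched (h : Unmatched M x) : partner M x = x :=
  dif_neg fun ⟨y, hy⟩ => h _ hy (Sym2.mem_mk_left x y)

theorem mk_partner_mem_of_ne (h : partner M x ≠ x) : s(x, partner M x) ∈ M := by
  unfold partner at h ⊢
  split_ifs at h ⊢ with hx
  · exact hx.choose_spec
  · exact absurd rfl h

variable [Fintype V] [DecidableEq V] {G : SimpleGraph V} [DecidableRel G.Adj]

theorem partner_eq_of_mem (hM : IsMatching G M) (h : s(x, y) ∈ M) : partner M x = y := by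
  have hx : ∃ y, s(x, y) ∈ M := ⟨y, h⟩
  rw [partner, dif_pos hx]
  have := hM.eq_of_mem_of_mem_s4 hx.choose_spec h (Sym2.mem_mk_left _ _) (Sym2.mem_mk_left _ _)
  exact Sym2.congr_right.mp this

theorem partner_partner (hM : IsMatching G M) (x : V) : partner M (partner M x) = x := by
  by_cases h : partner M x = x
  · rw [h, h]
  · exact partner_eq_of_mem hM (Sym2.eq_swap ▸ mk_partner_mem_of_ne h)

theorem unmatched_of_partner_eq_self (hM : IsMatching G M) (h : partner M x = x) :
    Unmatched M x := by
  intro e he hxe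
  obtain ⟨y, rfl⟩ := Sym2.mem_iff_exists.mp hxe
  have hyx : y = x := (partner_eq_of_mem hM he).symm.trans h
  exact (hM.adj he).ne hyx.symm

end Partner

section AlternatingWalk

variable {V : Type*} {A B : Finset (Sym2 V)} {v : V} {N k : ℕ}

noncomputable def alternatingWalk (A B : Finset (Sym2 V)) (v : V) : ℕ → V
  | 0 => v
  | k + 1 => partner (if k % 2 = 0 then A else B) (alternatingWalk A B v k)

theorem alternatingWalk_succ (k : ℕ) : alternatingWalk A B v (k + 1) =
    partner (if k % 2 = 0 then A else B) (alternatingWalk A B v k) := rfl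

theorem alternatingWalk_mk_mem (h : alternatingWalk A B v (k + 1) ≠ alternatingWalk A B v k) :
    s(alternatingWalk A B v k, alternatingWalk A B v (k + 1)) ∈
      (if k % 2 = 0 then A else B) :=
  mk_partner_mem_of_ne h

variable [Fintype V] [DecidableEq V] {G : SimpleGraph V} [DecidableRel G.Adj]

theorem alternatingWalk_eq_partner_succ (hA : IsMatching G A) (hB : IsMatching G B) (k : ℕ) :
    alternatingWalk A B v k =
      partner (if k % 2 = 0 then A else B) (alternatingWalk A B v (k + 1)) := by
  rw [alternatingWalk_succ, partner_partner (G := G)]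
  split_ifs <;> assumption

theorem alternatingWalk_adj (hA : IsMatching G A) (hB : IsMatching G B)
    (h : alternatingWalk A B v (k + 1) ≠ alternatingWalk A B v k) :
    G.Adj (alternatingWalk A B v k) (alternatingWalk A B v (k + 1)) := by
  have hmem := alternatingWalk_mk_mem h
  split_ifs at hmem
  exacts [hA.adj hmem, hB.adj hmem]

/-- A repetition `w i = w j` with `i < j` yields one with smaller `j`: `w (j - 1)` is the partner
of `w i` in the matching of step `j - 1`, which is `w (i - 1)` or `w (i + 1)` according to parity,
or `v` itself when `i = 0` and that matching is `B`. -/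
theorem alternatingWalk_injOn (hA : IsMatching G A) (hB : IsMatching G B) (hv : Unmatched B v)
    (hmove : ∀ k < N, alternatingWalk A B v (k + 1) ≠ alternatingWalk A B v k) :
    Set.InjOn (alternatingWalk A B v) (Set.Iic N) := by
  set w := alternatingWalk A B v
  suffices h : ∀ j ≤ N, ∀ i < j, w i ≠ w j by
    intro i hi j hj hij
    rcases lt_trichotomy i j with hlt | heq | hlt
    exacts [absurd hij (h j hj i hlt), heq, absurd hij.symm (h i hi j hlt)]
  intro j
  induction j using Nat.strong_induction_on with
  | _ j ih =>
  intro hj i hij heq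
  obtain ⟨j, rfl⟩ : ∃ j', j = j' + 1 := ⟨j - 1, by omega⟩
  have hback : w j = partner (if j % 2 = 0 then A else B) (w i) :=
    heq ▸ alternatingWalk_eq_partner_succ hA hB j
  rcases i with _ | i
  · by_cases hj2 : j % 2 = 0
    · have h1 : w j = w 1 := by rw [hback, if_pos hj2]; rfl
      rcases Nat.eq_zero_or_pos j with rfl | hpos
      · exact hmove 0 (by omega) heq.symm
      · exact ih j (by omega) (by omega) 1 (by omega) h1.symm
    · have h0 : w j = w 0 := by rw [hback, if_neg hj2]; exact partner_eq_self_of_unmatched hv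
      exact ih j (by omega) (by omega) 0 (by omega) h0.symm
  · by_cases hij2 : j % 2 = i % 2
    · have h1 : w j = w i := by
        rw [hback, hij2]; exact (alternatingWalk_eq_partner_succ hA hB i).symm
      exact ih j (by omega) (by omega) i (by omega) h1.symm
    · have h1 : w j = w (i + 2) := by
        rw [hback, show j % 2 = (i + 1) % 2 by omega]; rfl
      rcases Nat.lt_or_ge (i + 1) j with hlt | hge
      · exact ih j (by omega) (by omega) (i + 2) (by omega) h1.symm
      · exact hmove j (by omega) (by rw [← heq, show j = i + 1 by omega])

theorem exists_alternatingWalk_stall (hA : IsMatching G A) (hB : IsMatching G B)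
    (hv : Unmatched B v) :
    ∃ N, alternatingWalk A B v (N + 1) = alternatingWalk A B v N ∧
      ∀ k < N, alternatingWalk A B v (k + 1) ≠ alternatingWalk A B v k := by
  have hex : ∃ N, alternatingWalk A B v (N + 1) = alternatingWalk A B v N := by
    by_contra! hmove
    have hinj := alternatingWalk_injOn (N := Fintype.card V) hA hB hv fun k _ => hmove k
    have := Finset.card_le_card_of_injOn (s := Finset.range (Fintype.card V + 1))
      (t := Finset.univ) _ (fun _ _ => Finset.mem_coe.mpr (Finset.mem_univ _))
      (hinj.mono fun k hk => Nat.lt_succ_iff.mp (by simpa using hk))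
    simp at this
  exact ⟨Nat.find hex, Nat.find_spec hex, fun k hk => Nat.find_min hex hk⟩

theorem alternatingWalk_mk_notMem_right (hB : IsMatching G B) (hv : Unmatched B v)
    (hinj : Set.InjOn (alternatingWalk A B v) (Set.Iic N)) (hk : k < N) (hk2 : k % 2 = 0) :
    s(alternatingWalk A B v k, alternatingWalk A B v (k + 1)) ∉ B := by
  intro h
  have hnext := partner_eq_of_mem hB h
  rcases k with _ | k
  · have h10 : alternatingWalk A B v 1 = alternatingWalk A B v 0 :=
      hnext.symm.trans (partner_eq_self_of_unmatched hv)
    exact absurd (hinj (by simp; omega) (by simp) h10) (by omega)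
  · have hprev : partner B (alternatingWalk A B v (k + 1)) = alternatingWalk A B v k := by
      rw [alternatingWalk_succ, if_neg (by omega), partner_partner hB]
    exact absurd (hinj (by simp; omega) (by simp; omega) (hnext.symm.trans hprev)) (by omega)

end AlternatingWalk

section RangeLists

variable {V : Type*} {x : ℕ → V} {n : ℕ}

theorem pathEdges_map_range (x : ℕ → V) (n : ℕ) :
    pathEdges ((List.range (n + 1)).map x) = (List.range n).map fun k => s(x k, x (k + 1)) :=
  List.ext_getElem (by simp [pathEdges]) fun _ _ _ => by simp [pathEdges]

theorem isPathList_map_range {G : SimpleGraph V} (hinj : Set.InjOn x (Set.Iic n))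
    (hadj : ∀ k < n, G.Adj (x k) (x (k + 1))) : IsPathList G ((List.range (n + 1)).map x) := by
  refine ⟨List.Nodup.map_on ?_ List.nodup_range, ?_⟩
  · intro i hi j hj hij
    exact hinj (by simpa [Nat.lt_succ_iff] using hi) (by simpa [Nat.lt_succ_iff] using hj) hij
  · change List.IsChain _ _
    rw [List.isChain_map, List.isChain_range_succ]
    exact hadj

theorem alternatingList_map_range_iff [DecidableEq V] {M : Finset (Sym2 V)} :
    AlternatingList M ((List.range (n + 1)).map x) ↔
      ∀ k, k + 1 < n → (s(x k, x (k + 1)) ∈ M ↔ s(x (k + 1), x (k + 2)) ∉ M) := by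
  simp [AlternatingList, pathEdges_map_range]

theorem injOn_mk_succ {m : ℕ} (hinj : Set.InjOn x (Set.Iic (m + 1))) :
    Set.InjOn (fun k => s(x k, x (k + 1))) (Set.Iic m) := by
  intro i hi j hj hij
  simp only [Set.mem_Iic] at hi hj
  rcases Sym2.eq_iff.mp hij with ⟨h, -⟩ | ⟨h₁, h₂⟩
  · exact hinj (by simp; omega) (by simp; omega) h
  · have := hinj (by simp; omega) (by simp; omega) h₁
    have := hinj (by simp; omega) (by simp; omega) h₂
    omega

end RangeLists

section Augmenting

variable {V : Type*} [Fintype V] [DecidableEq V] {G : SimpleGraph V} [DecidableRel G.Adj]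
  {M A D : Finset (Sym2 V)} {x : ℕ → V} {n : ℕ}

theorem IsMatching.sdiff_union (hM : IsMatching G M) (hA : IsMatching G A)
    (hcover : ∀ f ∈ M, ∀ g ∈ A, ∀ y ∈ f, y ∈ g → f ∈ D) : IsMatching G ((M \ D) ∪ A) := by
  refine ⟨Finset.union_subset (Finset.sdiff_subset.trans hM.1) hA.1, ?_⟩
  intro f hf g hg hfg y hyf hyg
  simp only [Finset.mem_union, Finset.mem_sdiff] at hf hg
  rcases hf with ⟨hfM, hfD⟩ | hfA <;> rcases hg with ⟨hgM, hgD⟩ | hgA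
  · exact hM.2 f hfM g hgM hfg y hyf hyg
  · exact hfD (hcover f hfM g hgA y hyf hyg)
  · exact hgD (hcover g hgM f hfA y hyg hyf)
  · exact hA.2 f hfA g hgA hfg y hyf hyg

theorem isMatching_image_mk_even (hinj : Set.InjOn x (Set.Iic (2 * n + 1)))
    (hadj : ∀ k ≤ n, G.Adj (x (2 * k)) (x (2 * k + 1))) :
    IsMatching G ((Finset.range (n + 1)).image fun k => s(x (2 * k), x (2 * k + 1))) := by
  constructor
  · rintro _ hf
    obtain ⟨k, hk, rfl⟩ := Finset.mem_image.mp hf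
    exact SimpleGraph.mem_edgeFinset.mpr (hadj k (Finset.mem_range_succ_iff.mp hk))
  · rintro _ hf _ hg hfg y hyf hyg
    obtain ⟨k, hk, rfl⟩ := Finset.mem_image.mp hf
    obtain ⟨l, hl, rfl⟩ := Finset.mem_image.mp hg
    simp only [Finset.mem_range] at hk hl
    refine hfg (congrArg (fun k => s(x (2 * k), x (2 * k + 1))) ?_)
    rcases Sym2.mem_iff.mp hyf with rfl | rfl <;> rcases Sym2.mem_iff.mp hyg with h | h <;>
      have := hinj (by simp; omega) (by simp; omega) h <;> omega

theorem IsMatching.exists_card_lt_of_augmenting (hM : IsMatching G M)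
    (hinj : Set.InjOn x (Set.Iic (2 * n + 1)))
    (hadj : ∀ k ≤ n, G.Adj (x (2 * k)) (x (2 * k + 1)))
    (hin : ∀ k < n, s(x (2 * k + 1), x (2 * k + 2)) ∈ M)
    (hout : ∀ k ≤ n, s(x (2 * k), x (2 * k + 1)) ∉ M)
    (hfirst : Unmatched M (x 0)) (hlast : Unmatched M (x (2 * n + 1))) :
    ∃ M', IsMatching G M' ∧ M.card < M'.card := by
  set dropped := (Finset.range n).image fun k => s(x (2 * k + 1), x (2 * k + 2))
  set added := (Finset.range (n + 1)).image fun k => s(x (2 * k), x (2 * k + 1))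
  have he_inj := injOn_mk_succ (m := 2 * n) hinj
  have hdropped_card : dropped.card = n := by
    rw [Finset.card_image_of_injOn, Finset.card_range]
    intro i hi j hj hij
    simp only [Finset.coe_range, Set.mem_Iio] at hi hj
    have := he_inj (by simp; omega) (by simp; omega) hij
    omega
  have hadded_card : added.card = n + 1 := by
    rw [Finset.card_image_of_injOn, Finset.card_range]
    intro i hi j hj hij
    simp only [Finset.coe_range, Set.mem_Iio] at hi hj
    have := he_inj (by simp; omega) (by simp; omega) hij
    omega
  have hdropped_sub : dropped ⊆ M := by
    simpa only [dropped, Finset.image_subset_iff, Finset.mem_range] using hin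
  have hadded_disj : Disjoint M added := by
    rw [Finset.disjoint_right]
    rintro _ hf
    obtain ⟨k, hk, rfl⟩ := Finset.mem_image.mp hf
    exact hout k (Finset.mem_range_succ_iff.mp hk)
  -- inner path vertices are covered by dropped edges, and the two ends are `M`-unmatched
  have hcover : ∀ f ∈ M, ∀ g ∈ added, ∀ y ∈ f, y ∈ g → f ∈ dropped := by
    rintro f hf _ hg y hyf hyg
    obtain ⟨k, hk, rfl⟩ := Finset.mem_image.mp hg
    have hdrop : ∀ l < n, y ∈ s(x (2 * l + 1), x (2 * l + 2)) → f ∈ dropped := fun l hl hy =>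
      hM.eq_of_mem_of_mem_s4 hf (hin l hl) hyf hy ▸
        Finset.mem_image_of_mem _ (Finset.mem_range.mpr hl)
    rcases Sym2.mem_iff.mp hyg with rfl | rfl
    · rcases k with _ | k
      · exact absurd hyf (hfirst f hf)
      · exact hdrop k (by simp at hk; omega) (Sym2.mem_mk_right _ _)
    · rcases Nat.lt_or_ge k n with hlt | hge
      · exact hdrop k hlt (Sym2.mem_mk_left _ _)
      · obtain rfl : k = n := by simp at hk; omega
        exact absurd hyf (hlast f hf)
  refine ⟨(M \ dropped) ∪ added, hM.sdiff_union (isMatching_image_mk_even hinj hadj) hcover, ?_⟩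
  rw [Finset.card_union_of_disjoint (hadded_disj.mono_left Finset.sdiff_subset),
    Finset.card_sdiff_of_subset hdropped_sub, hdropped_card, hadded_card]
  have := hdropped_card ▸ Finset.card_le_card hdropped_sub
  omega

end Augmenting

theorem alternating_path_to_M₂_unmatched_general {V : Type*} [Fintype V] [DecidableEq V]
    (G : SimpleGraph V) [DecidableRel G.Adj] (M₁ M₂ : Finset (Sym2 V))
    (hM₁ : IsMatching G M₁) (hM₁max : ∀ M', IsMatching G M' → M'.card ≤ M₁.card)
    (hM₂ : IsMatching G M₂)
    (v : V) (hv₁ : Unmatched M₁ v) :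
    ∃ (w : V) (p : List V), IsPathList G p ∧ AlternatingList M₁ p ∧
      p.head? = some v ∧ p.getLast? = some w ∧ Unmatched M₂ w := by
  obtain ⟨N, hstall, hmove⟩ := exists_alternatingWalk_stall hM₂ hM₁ hv₁
  set w := alternatingWalk M₂ M₁ v
  have hinj := alternatingWalk_injOn hM₂ hM₁ hv₁ hmove
  have hM₁_iff : ∀ k < N, s(w k, w (k + 1)) ∈ M₁ ↔ k % 2 = 1 := by
    intro k hk
    by_cases hk2 : k % 2 = 0
    · exact iff_of_false (alternatingWalk_mk_notMem_right hM₁ hv₁ hinj hk hk2) (by omega)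
    · exact iff_of_true (by simpa [hk2] using alternatingWalk_mk_mem (hmove k hk)) (by omega)
  have hadj k (hk : k < N) : G.Adj (w k) (w (k + 1)) := alternatingWalk_adj hM₂ hM₁ (hmove k hk)
  have hunmatched : Unmatched (if N % 2 = 0 then M₂ else M₁) (w N) :=
    unmatched_of_partner_eq_self (by split_ifs <;> assumption) hstall
  rcases Nat.even_or_odd' N with ⟨n, rfl | rfl⟩
  · refine ⟨w (2 * n), (List.range (2 * n + 1)).map w, isPathList_map_range hinj hadj,
      alternatingList_map_range_iff.mpr ?_, by simp [List.head?_range]; rfl,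
      by simp [List.getLast?_range], ?_⟩
    · intro k hk
      rw [hM₁_iff k (by omega), hM₁_iff (k + 1) hk]
      omega
    · simpa using hunmatched
  · obtain ⟨M', hM', hlt⟩ := hM₁.exists_card_lt_of_augmenting hinj
      (fun k hk => hadj (2 * k) (by omega))
      (fun k hk => (hM₁_iff (2 * k + 1) (by omega)).mpr (by omega))
      (fun k hk h => by have := (hM₁_iff (2 * k) (by omega)).mp h; omega)
      hv₁ (by simpa using hunmatched)
    exact absurd (hM₁max M' hM') (not_le.mpr hlt)

/-- If `M₁`, `M₂` are maximum matchings and `v` is unmatched by `M₁` but matched by `M₂`,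
then some vertex `w` unmatched by `M₂` is reached from `v` by an `M₁`-alternating path. -/
theorem alternating_path_to_M₂_unmatched {V : Type*} [Fintype V] [DecidableEq V]
    (G : SimpleGraph V) [DecidableRel G.Adj] (M₁ M₂ : Finset (Sym2 V))
    (hM₁ : IsMatching G M₁) (hM₁max : ∀ M', IsMatching G M' → M'.card ≤ M₁.card)
    (hM₂ : IsMatching G M₂) (hM₂max : ∀ M', IsMatching G M' → M'.card ≤ M₂.card)
    (v : V) (hv₁ : Unmatched M₁ v) (hv₂ : ¬ Unmatched M₂ v) :
    ∃ (w : V) (p : List V), IsPathList G p ∧ AlternatingList M₁ p ∧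
      p.head? = some v ∧ p.getLast? = some w ∧ Unmatched M₂ w :=
  alternating_path_to_M₂_unmatched_general G M₁ M₂ hM₁ hM₁max hM₂ v hv₁
end

section
/- Let M be a maximum matching of a finite bipartite graph Γ = (V⁺, V⁻, E), and let D ⊆ V⁺ be the set of vertices of V⁺ reachable from some M-unmatched vertex of V⁺ by an M-alternating path (in the auxiliary orientation where matched edges are reversed). Then D is independent of the choice of maximum matching M. -/
/-!
For a maximum matching `M`, `Dset E M` is the set of vertices of `V⁺` missed by some maximum
matching, a description not involving `M`. If `a` is reached from an unmatched vertex by a shortest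
alternating path, flipping `M` along that path gives a matching of the same size missing `a`.
Conversely, if no unmatched vertex reaches `a`, the set `S` of vertices from which `a` is reachable
is covered by `M`, and every neighbour of an `M`-partner of `S` lies in `S`. So in any matching
missing `a`, the at most `|S| - 1` edges at `S` can be traded for the `|S|` edges of `M` at `S`.
-/

/-- A matching in the bipartite graph with parts `α`, `β` and edge relation `E`. -/
def IsBMatching {α β : Type*} (E : α → β → Prop) (M : Finset (α × β)) : Prop :=
  (∀ p ∈ M, E p.1 p.2) ∧ ∀ p ∈ M, ∀ q ∈ M, p ≠ q → p.1 ≠ q.1 ∧ p.2 ≠ q.2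

/-- One step in the auxiliary directed graph associated with a matching `M`:
non-matching edges are directed from `V⁺` to `V⁻`, matching edges are reversed. -/
inductive AuxStep {α β : Type*} (E : α → β → Prop) (M : Finset (α × β)) :
    α ⊕ β → α ⊕ β → Prop
  | fwd {a : α} {b : β} : E a b → (a, b) ∉ M → AuxStep E M (Sum.inl a) (Sum.inr b)
  | bwd {a : α} {b : β} : (a, b) ∈ M → AuxStep E M (Sum.inr b) (Sum.inl a)

/-- The set of `V⁺`-vertices reachable from some `M`-unmatched vertex of `V⁺` by an
`M`-alternating path in the auxiliary graph. -/
def Dset {α β : Type*} (E : α → β → Prop) (M : Finset (α × β)) : Set α :=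
  {a | ∃ u : α, (∀ p ∈ M, p.1 ≠ u) ∧
    Relation.ReflTransGen (AuxStep E M) (Sum.inl u) (Sum.inl a)}

open Relation

namespace IsBMatching

variable {α β : Type*} {E : α → β → Prop} {M N : Finset (α × β)}

lemma snd_eq (hM : IsBMatching E M) {x : α} {b c : β} (hb : (x, b) ∈ M) (hc : (x, c) ∈ M) :
    b = c := by
  by_contra hbc
  exact (hM.2 _ hb _ hc (by simp [hbc])).1 rfl

lemma fst_eq (hM : IsBMatching E M) {x y : α} {b : β} (hx : (x, b) ∈ M) (hy : (y, b) ∈ M) :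
    x = y := by
  by_contra hxy
  exact (hM.2 _ hx _ hy (by simp [hxy])).2 rfl

lemma mono (hM : IsBMatching E M) (hNM : N ⊆ M) : IsBMatching E N :=
  ⟨fun p hp => hM.1 p (hNM hp), fun p hp q hq => hM.2 p (hNM hp) q (hNM hq)⟩

lemma union [DecidableEq α] [DecidableEq β] (hM : IsBMatching E M) (hN : IsBMatching E N)
    (hMN : ∀ p ∈ M, ∀ q ∈ N, p.1 ≠ q.1 ∧ p.2 ≠ q.2) : IsBMatching E (M ∪ N) := by
  refine ⟨fun p hp => (Finset.mem_union.1 hp).elim (hM.1 p) (hN.1 p), fun p hp q hq hpq => ?_⟩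
  rcases Finset.mem_union.1 hp with hp | hp <;> rcases Finset.mem_union.1 hq with hq | hq
  · exact hM.2 p hp q hq hpq
  · exact hMN p hp q hq
  · exact (hMN q hq p hp).imp Ne.symm Ne.symm
  · exact hN.2 p hp q hq hpq

lemma card_image_fst [DecidableEq α] (hM : IsBMatching E M) : (M.image Prod.fst).card = M.card :=
  Finset.card_image_of_injOn fun p hp q hq hpq => by
    by_contra hne
    exact (hM.2 p hp q hq hne).1 hpq

lemma card_lt_card_of_image_fst_ssubset [DecidableEq α] (hM : IsBMatching E M)
    (hN : IsBMatching E N) (h : M.image Prod.fst ⊂ N.image Prod.fst) : M.card < N.card := by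
  simpa only [hM.card_image_fst, hN.card_image_fst] using Finset.card_lt_card h

lemma insert_erase [DecidableEq α] [DecidableEq β] (hM : IsBMatching E M) {u x : α} {b : β}
    (hu : ∀ p ∈ M, p.1 ≠ u) (hub : E u b) (hxb : (x, b) ∈ M) :
    IsBMatching E (insert (u, b) (M.erase (x, b))) := by
  have hsingle : IsBMatching E {(u, b)} :=
    ⟨by simpa using hub, fun p hp q hq hpq => by simp_all⟩
  refine Finset.insert_eq (u, b) _ ▸ hsingle.union (hM.mono (Finset.erase_subset _ _)) ?_
  intro p hp q hq
  obtain ⟨hqxb, hq⟩ := Finset.mem_erase.1 hq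
  rw [Finset.mem_singleton.1 hp]
  refine ⟨(hu q hq).symm, fun (hbq : b = q.2) => hqxb ?_⟩
  have hqx : q.1 = x := hM.fst_eq (show (q.1, b) ∈ M by rw [hbq]; exact hq) hxb
  ext <;> simp [hqx, hbq]

end IsBMatching

section Dset

variable {α β : Type*} {E : α → β → Prop} {M N : Finset (α × β)}

lemma AuxStep.of_agree {M' : Finset (α × β)} {b : β}
    (hMM' : ∀ y c, c ≠ b → ((y, c) ∈ M ↔ (y, c) ∈ M')) {s t : α ⊕ β} (h : AuxStep E M s t)
    (hs : s ≠ .inr b) (ht : t ≠ .inr b) : AuxStep E M' s t := by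
  cases h with
  | fwd hE hM => exact .fwd hE fun h => hM ((hMM' _ _ fun hc => ht (by rw [hc])).2 h)
  | bwd hM => exact .bwd ((hMM' _ _ fun hc => hs (by rw [hc])).1 hM)

lemma reflTransGen_auxStep_of_adj (hM : IsBMatching E M) {x y : α} {b : β} {t : α ⊕ β}
    (hxb : (x, b) ∈ M) (hyb : E y b) (hx : ReflTransGen (AuxStep E M) (.inl x) t) :
    ReflTransGen (AuxStep E M) (.inl y) t := by
  by_cases hyb' : (y, b) ∈ M
  · rwa [hM.fst_eq hyb' hxb]
  · exact .head (.fwd hyb hyb') (.head (.bwd hxb) hx)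

lemma exists_unmatched_of_isChain {a : α} (l : List (α ⊕ β)) {M : Finset (α × β)} {u : α}
    (hM : IsBMatching E M) (hu : ∀ p ∈ M, p.1 ≠ u)
    (hl : (.inl u :: l).IsChain (AuxStep E M)) (hla : (.inl u :: l).getLast (by simp) = .inl a) :
    ∃ N, IsBMatching E N ∧ N.card = M.card ∧ ∀ q ∈ N, q.1 ≠ a := by
  classical
  match l, hl, hla with
  | [], _, hla =>
    obtain rfl : u = a := Sum.inl_injective hla
    exact ⟨M, hM, rfl, hu⟩
  | [s], hl, hla =>
    obtain rfl : s = .inl a := hla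
    cases List.isChain_pair.1 hl
  | s :: t :: rest, hl, hla =>
    obtain ⟨hus, hst, hrest⟩ : AuxStep E M (.inl u) s ∧ AuxStep E M s t ∧
        (t :: rest).IsChain (AuxStep E M) := by simpa using hl
    obtain ⟨b, rfl, hub, hubM⟩ : ∃ b, s = .inr b ∧ E u b ∧ (u, b) ∉ M := by
      cases hus with | fwd hE hM => exact ⟨_, rfl, hE, hM⟩
    obtain ⟨x, rfl, hxb⟩ : ∃ x, t = .inl x ∧ (x, b) ∈ M := by
      cases hst with | bwd hM => exact ⟨_, rfl, hM⟩
    -- A path returning to `b` can be shortcut; otherwise it stays alternating after the flip.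
    by_cases hb : .inr b ∈ rest
    · obtain ⟨r₁, r₂, rfl⟩ := List.append_of_mem hb
      refine exists_unmatched_of_isChain (.inr b :: r₂) hM hu ?_ ?_
      · exact .cons_cons (.fwd hub hubM) (List.isChain_cons_split.1 hrest).2
      · simpa using hla
    · set M' := insert (u, b) (M.erase (x, b))
      have hM' : IsBMatching E M' := hM.insert_erase hu hub hxb
      have hcard : M'.card = M.card := by
        rw [Finset.card_insert_of_notMem (fun h => hu _ (Finset.mem_of_mem_erase h) rfl),
          Finset.card_erase_add_one hxb]
      have hx : ∀ p ∈ M', p.1 ≠ x := by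
        rintro ⟨y, c⟩ hp rfl
        rcases Finset.mem_insert.1 hp with hp | hp
        · exact hu _ hxb (Prod.ext_iff.1 hp).1
        · exact (Finset.mem_erase.1 hp).1 (by rw [hM.snd_eq (Finset.mem_of_mem_erase hp) hxb])
      have hagree : ∀ y c, c ≠ b → ((y, c) ∈ M ↔ (y, c) ∈ M') := by
        intro y c hc
        simp [M', hc]
      obtain ⟨N, hN, hNcard, ha⟩ := exists_unmatched_of_isChain rest hM' hx
        (hrest.imp_of_mem_imp fun s t hs ht hst => hst.of_agree hagree (by rintro rfl; simp_all)
          (by rintro rfl; simp_all)) (by simpa using hla)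
      exact ⟨N, hN, hNcard.trans hcard, ha⟩
termination_by l.length

lemma exists_unmatched_of_mem_Dset (hM : IsBMatching E M) {a : α} (ha : a ∈ Dset E M) :
    ∃ N, IsBMatching E N ∧ N.card = M.card ∧ ∀ q ∈ N, q.1 ≠ a := by
  obtain ⟨u, hu, hua⟩ := ha
  obtain ⟨l, hl, hla⟩ := List.exists_isChain_cons_of_relationReflTransGen hua
  exact exists_unmatched_of_isChain l hM hu hl hla

lemma exists_card_lt_of_notMem_Dset (hM : IsBMatching E M) (hN : IsBMatching E N) {a : α}
    (haN : ∀ q ∈ N, q.1 ≠ a) (haD : a ∉ Dset E M) :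
    ∃ N', IsBMatching E N' ∧ N.card < N'.card := by
  classical
  set R : α → Prop := fun x => ReflTransGen (AuxStep E M) (.inl x) (.inl a)
  have hmatched : ∀ x, R x → ∃ b, (x, b) ∈ M := by
    intro x hx
    by_contra! h
    exact haD ⟨x, fun p hp hpx => h p.2 (hpx ▸ hp), hx⟩
  set P := M.filter (R ·.1)
  set Q := N.filter (¬ R ·.1)
  have hP : IsBMatching E P := hM.mono (Finset.filter_subset _ _)
  have hPQ : ∀ p ∈ P, ∀ q ∈ Q, p.1 ≠ q.1 ∧ p.2 ≠ q.2 := by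
    intro p hp q hq
    rw [Finset.mem_filter] at hp hq
    refine ⟨fun h => hq.2 (h ▸ hp.2), fun h => hq.2 ?_⟩
    exact reflTransGen_auxStep_of_adj hM hp.1 (h ▸ hN.1 q hq.1) hp.2
  refine ⟨P ∪ Q, hP.union (hN.mono (Finset.filter_subset _ _)) hPQ, ?_⟩
  have hlt : (N.filter (R ·.1)).card < P.card := by
    refine (hN.mono (Finset.filter_subset _ _)).card_lt_card_of_image_fst_ssubset hP
      ((Finset.ssubset_iff_of_subset ?_).2 ⟨a, ?_, ?_⟩)
    · intro x hx
      obtain ⟨q, hq, rfl⟩ := Finset.mem_image.1 hx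
      rw [Finset.mem_filter] at hq
      obtain ⟨b, hb⟩ := hmatched _ hq.2
      exact Finset.mem_image.2 ⟨_, Finset.mem_filter.2 ⟨hb, hq.2⟩, rfl⟩
    · obtain ⟨b, hab⟩ := hmatched a .refl
      exact Finset.mem_image.2 ⟨(a, b), Finset.mem_filter.2 ⟨hab, .refl⟩, rfl⟩
    · simpa using fun b hb _ => haN _ hb rfl
  have hsplit : (N.filter (R ·.1)).card + Q.card = N.card :=
    Finset.card_filter_add_card_filter_not _
  rw [Finset.card_union_of_disjoint (Finset.disjoint_left.2 fun p hp hq => (hPQ p hp p hq).1 rfl)]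
  omega

lemma Dset_eq_of_max (hM : IsBMatching E M)
    (hMmax : ∀ M', IsBMatching E M' → M'.card ≤ M.card) :
    Dset E M = {a | ∃ N, IsBMatching E N ∧ N.card = M.card ∧ ∀ q ∈ N, q.1 ≠ a} := by
  ext a
  refine ⟨exists_unmatched_of_mem_Dset hM, fun ⟨N, hN, hcard, haN⟩ => ?_⟩
  by_contra haD
  obtain ⟨N', hN', hlt⟩ := exists_card_lt_of_notMem_Dset hM hN haN haD
  exact (hcard ▸ hlt).not_ge (hMmax N' hN')

end Dset

theorem Dset_independent_general {α β : Type*} (E : α → β → Prop)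
    (M₁ M₂ : Finset (α × β))
    (hM₁ : IsBMatching E M₁) (hM₁max : ∀ M', IsBMatching E M' → M'.card ≤ M₁.card)
    (hM₂ : IsBMatching E M₂) (hM₂max : ∀ M', IsBMatching E M' → M'.card ≤ M₂.card) :
    Dset E M₁ = Dset E M₂ := by
  rw [Dset_eq_of_max hM₁ hM₁max, Dset_eq_of_max hM₂ hM₂max,
    le_antisymm (hM₂max M₁ hM₁) (hM₁max M₂ hM₂)]

/-- The set of `V⁺`-vertices reachable by alternating paths from unmatched vertices
does not depend on the choice of maximum matching. -/
theorem Dset_independent {α β : Type*} [Fintype α] [Fintype β] (E : α → β → Prop)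
    (M₁ M₂ : Finset (α × β))
    (hM₁ : IsBMatching E M₁) (hM₁max : ∀ M', IsBMatching E M' → M'.card ≤ M₁.card)
    (hM₂ : IsBMatching E M₂) (hM₂max : ∀ M', IsBMatching E M' → M'.card ≤ M₂.card) :
    Dset E M₁ = Dset E M₂ :=
  Dset_independent_general E M₁ M₂ hM₁ hM₁max hM₂ hM₂max
end

section
/- Observational equivalence is an equivalence relation: defining x^i ∼ x^j iff rank O(A,C_i) = rank O(A,C_j) = rank O(A, [C_i; C_j]), the relation ∼ on states is reflexive, symmetric, and transitive. -/
/-!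
The row space of `O(A, [C_i; C_j])` is the sum of those of `O(A, C_i)` and `O(A, C_j)`.
For subspaces `S, T`, `dim T = dim (S ⊔ T)` forces `S ≤ T`, and then `dim S = dim T` forces
`S = T`. So `x^i ∼ x^j` says exactly that `O(A, C_i)` and `O(A, C_j)` have the same row space,
and equality of row spaces is an equivalence relation.
-/

/-- The observability matrix `O(A, C) = [C; CA; …; CA^{n−1}]` of the pair `(A, C)`,
with the rows of `C A^k` stacked for `k = 0, …, n−1`. -/
noncomputable def obsMat {n : ℕ} {m : Type*} (A : Matrix (Fin n) (Fin n) ℝ)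
    (C : Matrix m (Fin n) ℝ) : Matrix (Fin n × m) (Fin n) ℝ :=
  Matrix.of fun p j => (C * A ^ (p.1 : ℕ)) p.2 j

open Module

namespace Submodule

variable {K V : Type*} [DivisionRing K] [AddCommGroup V] [Module K V] [FiniteDimensional K V]

theorem finrank_eq_finrank_sup_iff_le {S T : Submodule K V} :
    finrank K T = finrank K ↥(S ⊔ T) ↔ S ≤ T :=
  ⟨fun h => sup_eq_right.mp (eq_of_le_of_finrank_eq le_sup_right h).symm,
    fun h => by rw [sup_eq_right.mpr h]⟩

theorem finrank_eq_and_finrank_eq_finrank_sup_iff {S T : Submodule K V} :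
    finrank K S = finrank K T ∧ finrank K T = finrank K ↥(S ⊔ T) ↔ S = T := by
  rw [finrank_eq_finrank_sup_iff_le]
  refine ⟨fun ⟨hrank, hle⟩ => eq_of_le_of_finrank_eq hle hrank, ?_⟩
  rintro rfl
  exact ⟨rfl, le_rfl⟩

end Submodule

section

variable {n : ℕ} {m m₁ m₂ : Type*} (A : Matrix (Fin n) (Fin n) ℝ)

noncomputable def obsRowSpace (C : Matrix m (Fin n) ℝ) : Submodule ℝ (Fin n → ℝ) :=
  Submodule.span ℝ (Set.range (obsMat A C).row)

theorem rank_obsMat [Finite m] (C : Matrix m (Fin n) ℝ) :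
    (obsMat A C).rank = finrank ℝ (obsRowSpace A C) :=
  Matrix.rank_eq_finrank_span_row _

@[simp]
theorem obsMat_fromRows_inl (B : Matrix m₁ (Fin n) ℝ) (C : Matrix m₂ (Fin n) ℝ) (k : Fin n)
    (a : m₁) : obsMat A (Matrix.fromRows B C) (k, Sum.inl a) = obsMat A B (k, a) := by
  ext j; simp [obsMat, Matrix.mul_apply]

@[simp]
theorem obsMat_fromRows_inr (B : Matrix m₁ (Fin n) ℝ) (C : Matrix m₂ (Fin n) ℝ) (k : Fin n)
    (a : m₂) : obsMat A (Matrix.fromRows B C) (k, Sum.inr a) = obsMat A C (k, a) := by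
  ext j; simp [obsMat, Matrix.mul_apply]

theorem range_row_obsMat_fromRows (B : Matrix m₁ (Fin n) ℝ) (C : Matrix m₂ (Fin n) ℝ) :
    Set.range (obsMat A (Matrix.fromRows B C)).row =
      Set.range (obsMat A B).row ∪ Set.range (obsMat A C).row := by
  ext v
  rw [Set.mem_union, Set.mem_range, Set.mem_range, Set.mem_range]
  simp only [Prod.exists, Sum.exists, Matrix.row, obsMat_fromRows_inl, obsMat_fromRows_inr,
    exists_or]

theorem obsRowSpace_fromRows (B : Matrix m₁ (Fin n) ℝ) (C : Matrix m₂ (Fin n) ℝ) :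
    obsRowSpace A (Matrix.fromRows B C) = obsRowSpace A B ⊔ obsRowSpace A C := by
  rw [obsRowSpace, range_row_obsMat_fromRows, Submodule.span_union]
  rfl

end

/-- Observational equivalence `x^i ∼ x^j`, defined by
`rank O(A,C_i) = rank O(A,C_j) = rank O(A,[C_i;C_j])`, is an equivalence relation. -/
theorem observational_equivalence {n : ℕ} (A : Matrix (Fin n) (Fin n) ℝ)
    (C : Fin n → Matrix (Fin 1) (Fin n) ℝ) :
    Equivalence (fun i j : Fin n =>
      (obsMat A (C i)).rank = (obsMat A (C j)).rank ∧
      (obsMat A (C j)).rank = (obsMat A (Matrix.fromRows (C i) (C j))).rank) := by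
  have same_obsRowSpace : ∀ i j,
      ((obsMat A (C i)).rank = (obsMat A (C j)).rank ∧
        (obsMat A (C j)).rank = (obsMat A (Matrix.fromRows (C i) (C j))).rank) ↔
      obsRowSpace A (C i) = obsRowSpace A (C j) := by
    intro i j
    rw [rank_obsMat, rank_obsMat, rank_obsMat, obsRowSpace_fromRows]
    exact Submodule.finrank_eq_and_finrank_eq_finrank_sup_iff
  simp_rw [same_obsRowSpace]
  exact InvImage.equivalence _ _ eq_equivalence
end
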